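/- arXiv:1507.07352 — 7 statements merged into one kernel-verified Lean document; each statement's English description precedes it below -/
import Mathlib

section
/- On the 7-dimensional Lie algebra g with structure equations de¹ = e^{17}, de² = e^{27}, de³ = −e^{37}, de⁴ = −e^{47}, de⁵ = de⁶ = de⁷ = 0 (with respect to a basis {e¹,…,e⁷} of g*), the 3-form φ = e^{127} + e^{347} + e^{567} + e^{136} + e^{145} + e^{235} − e^{246} is closed: dφ = 0. -/
/-!
The Lie algebra is `ℝ⁶ ⋊ ℝe₇` with `ad e₇` diagonal, so `de^i = λ_i e^{i7}` with
`λ = (1, 1, -1, -1, 0, 0, 0)`, and for a 3-form `α` one has `dα = Dα ∧ e⁷`, where `D` multiplies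
`e^{ijk}` by `λ_i + λ_j + λ_k`. Every term of `φ` either contains `e⁷` or has weight
`λ_i + λ_j + λ_k = 0`, so `dφ = 0`.
-/

open Finset BigOperators

/-- Kronecker delta as a real number. -/
def kd {n : ℕ} (a i : Fin n) : ℝ := if a = i then 1 else 0

/-- The 2-form `e^a ∧ e^b` evaluated on basis vectors `e_i, e_j`. -/
def pairF {n : ℕ} (a b i j : Fin n) : ℝ := kd a i * kd b j - kd a j * kd b i

/-- The 3-form `e^a ∧ e^b ∧ e^c` evaluated on basis vectors. -/
def tripF {n : ℕ} (a b c i j k : Fin n) : ℝ :=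
  Matrix.det !![kd a i, kd a j, kd a k; kd b i, kd b j, kd b k; kd c i, kd c j, kd c k]

/-- The 4-form `e^a ∧ e^b ∧ e^c ∧ e^d` evaluated on basis vectors. -/
def quadF {n : ℕ} (a b c d i j k l : Fin n) : ℝ :=
  Matrix.det !![kd a i, kd a j, kd a k, kd a l;
                kd b i, kd b j, kd b k, kd b l;
                kd c i, kd c j, kd c k, kd c l;
                kd d i, kd d j, kd d k, kd d l]

/-- Chevalley–Eilenberg differential of a 2-form, on basis vectors.
`br i a b` is the coefficient of `e_i` in `[e_a, e_b]`. -/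
def d2 {n : ℕ} (br : Fin n → Fin n → Fin n → ℝ) (α : Fin n → Fin n → ℝ)
    (a b c : Fin n) : ℝ :=
  -(∑ m, br m a b * α m c) + (∑ m, br m a c * α m b) - (∑ m, br m b c * α m a)

/-- Chevalley–Eilenberg differential of a 3-form, on basis vectors. -/
def d3 {n : ℕ} (br : Fin n → Fin n → Fin n → ℝ) (α : Fin n → Fin n → Fin n → ℝ)
    (a b c d : Fin n) : ℝ :=
  -(∑ m, br m a b * α m c d) + (∑ m, br m a c * α m b d) - (∑ m, br m a d * α m b c)
  - (∑ m, br m b c * α m a d) + (∑ m, br m b d * α m a c) - (∑ m, br m c d * α m a b)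

/-- Chevalley–Eilenberg differential of a 4-form, on basis vectors. -/
def d4 {n : ℕ} (br : Fin n → Fin n → Fin n → ℝ)
    (α : Fin n → Fin n → Fin n → Fin n → ℝ) (a b c d e : Fin n) : ℝ :=
  -(∑ m, br m a b * α m c d e) + (∑ m, br m a c * α m b d e) - (∑ m, br m a d * α m b c e)
  + (∑ m, br m a e * α m b c d) - (∑ m, br m b c * α m a d e) + (∑ m, br m b d * α m a c e)
  - (∑ m, br m b e * α m a c d) - (∑ m, br m c d * α m a b e) + (∑ m, br m c e * α m a b d)
  - (∑ m, br m d e * α m a b c)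

/-- Wedge product of two 2-forms, evaluated on basis vectors. -/
def w22 {n : ℕ} (α β : Fin n → Fin n → ℝ) (i j k l : Fin n) : ℝ :=
  α i j * β k l - α i k * β j l + α i l * β j k
  + α j k * β i l - α j l * β i k + α k l * β i j

/-- Wedge product of a 2-form and a 1-form, evaluated on basis vectors. -/
def w21 {n : ℕ} (α : Fin n → Fin n → ℝ) (β : Fin n → ℝ) (i j k : Fin n) : ℝ :=
  α i j * β k - α i k * β j + α j k * β i

/-- Wedge product of a 3-form and a 1-form, evaluated on basis vectors. -/
def w31 {n : ℕ} (α : Fin n → Fin n → Fin n → ℝ) (β : Fin n → ℝ) (i j k l : Fin n) : ℝ :=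
  α i j k * β l - α i j l * β k + α i k l * β j - α j k l * β i

/-- `ω = e^{12} + e^{34} + e^{56}` (0-indexed). -/
def omega6 : Fin 6 → Fin 6 → ℝ := fun i j => pairF 0 1 i j + pairF 2 3 i j + pairF 4 5 i j

/-- `ψ₊ = e^{135} − e^{146} − e^{236} − e^{245}` (0-indexed). -/
def psi6 : Fin 6 → Fin 6 → Fin 6 → ℝ := fun i j k =>
  tripF 0 2 4 i j k - tripF 0 3 5 i j k - tripF 1 2 5 i j k - tripF 1 3 4 i j k

/-- `ω` viewed on a 7-dimensional space (indices 0..5). -/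
def omega7 : Fin 7 → Fin 7 → ℝ := fun i j => pairF 0 1 i j + pairF 2 3 i j + pairF 4 5 i j

/-- `ψ₊` viewed on a 7-dimensional space. -/
def psi7 : Fin 7 → Fin 7 → Fin 7 → ℝ := fun i j k =>
  tripF 0 2 4 i j k - tripF 0 3 5 i j k - tripF 1 2 5 i j k - tripF 1 3 4 i j k

/-- `η = e^7`, the 1-form dual to the extra direction. -/
def eta7 : Fin 7 → ℝ := kd 6

/-- The real 6×6 representation of a complex 3×3 matrix: each entry `a+bi`
becomes the 2×2 block `[[a, b], [−b, a]]`. -/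
def realRep (A : Matrix (Fin 3) (Fin 3) ℂ) : Matrix (Fin 6) (Fin 6) ℝ :=
  Matrix.of fun i j =>
    let p : Fin 3 := ⟨(i : ℕ) / 2, by have := i.isLt; omega⟩
    let q : Fin 3 := ⟨(j : ℕ) / 2, by have := j.isLt; omega⟩
    if (i : ℕ) % 2 = 0 then
      (if (j : ℕ) % 2 = 0 then (A p q).re else (A p q).im)
    else
      (if (j : ℕ) % 2 = 0 then -(A p q).im else (A p q).re)

/-- Structure constants of the semidirect sum `g = h ⊕_D ℝξ`, where `f` are the
structure constants of `h` ( `f i a b` = coefficient of `e_i` in `[e_a,e_b]` ),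
`ξ = e₇` and `[ξ, U] = D U`. -/
def brg (f : Fin 6 → Fin 6 → Fin 6 → ℝ) (D : Matrix (Fin 6) (Fin 6) ℝ) :
    Fin 7 → Fin 7 → Fin 7 → ℝ := fun i a b =>
  if hi : (i : ℕ) < 6 then
    if ha : (a : ℕ) < 6 then
      if hb : (b : ℕ) < 6 then f ⟨i, hi⟩ ⟨a, ha⟩ ⟨b, hb⟩
      else -(D ⟨i, hi⟩ ⟨a, ha⟩)
    else
      if hb : (b : ℕ) < 6 then D ⟨i, hi⟩ ⟨b, hb⟩ else 0
  else 0

/-- Structure constants of `g = (e^{17}, e^{27}, −e^{37}, −e^{47}, 0, 0, 0)`: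
`br2 i a b` is the coefficient of `e_i` in `[e_a, e_b]` (0-indexed). -/
def bb2 : Fin 7 → Fin 7 → Fin 7 → ℝ := fun i a b =>
  if i = 0 ∧ a = 0 ∧ b = 6 then -1
  else if i = 1 ∧ a = 1 ∧ b = 6 then -1
  else if i = 2 ∧ a = 2 ∧ b = 6 then 1
  else if i = 3 ∧ a = 3 ∧ b = 6 then 1
  else 0

def br2 : Fin 7 → Fin 7 → Fin 7 → ℝ := fun i a b => bb2 i a b - bb2 i b a

/-- `φ = e^{127}+e^{347}+e^{567}+e^{136}+e^{145}+e^{235}−e^{246}` (0-indexed). -/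
def phi2 : Fin 7 → Fin 7 → Fin 7 → ℝ := fun i j k =>
  tripF 0 1 6 i j k + tripF 2 3 6 i j k + tripF 4 5 6 i j k
    + tripF 0 2 5 i j k + tripF 0 3 4 i j k + tripF 1 2 4 i j k - tripF 1 3 5 i j k

/-- Structure constants of the Lie algebra spanned by `e_a` with `[e_z, e_a] = w a • e_a` for `a ≠ z`
and all other brackets zero. -/
def brDiag {n : ℕ} (z : Fin n) (w : Fin n → ℝ) : Fin n → Fin n → Fin n → ℝ :=
  fun m a b => w m * (kd z a * kd m b - kd m a * kd z b)

def diagDeriv3 {n : ℕ} (w : Fin n → ℝ) (α : Fin n → Fin n → Fin n → ℝ) :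
    Fin n → Fin n → Fin n → ℝ :=
  fun i j k => (w i + w j + w k) * α i j k

structure IsAlt3 {n : ℕ} (α : Fin n → Fin n → Fin n → ℝ) : Prop where
  swap_left : ∀ i j k, α j i k = -α i j k
  swap_right : ∀ i j k, α i k j = -α i j k

namespace IsAlt3

variable {n : ℕ} {α : Fin n → Fin n → Fin n → ℝ}

theorem cycle (h : IsAlt3 α) (i j k : Fin n) : α k i j = α i j k := by
  rw [h.swap_left, h.swap_right, neg_neg]

theorem apply_self_left (h : IsAlt3 α) (i k : Fin n) : α i i k = 0 := by
  linarith [h.swap_left i i k]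

theorem apply_self_right (h : IsAlt3 α) (i j : Fin n) : α i j j = 0 := by
  linarith [h.swap_right i j j]

theorem apply_self_outer (h : IsAlt3 α) (i j : Fin n) : α i j i = 0 := by
  rw [← h.cycle, h.apply_self_left]

theorem diagDeriv3 (h : IsAlt3 α) (w : Fin n → ℝ) : IsAlt3 (diagDeriv3 w α) where
  swap_left i j k := by simp only [_root_.diagDeriv3, h.swap_left i j k]; ring
  swap_right i j k := by simp only [_root_.diagDeriv3, h.swap_right i j k]; ring

end IsAlt3

theorem sum_brDiag_mul {n : ℕ} (z : Fin n) (w f : Fin n → ℝ) (a b : Fin n) :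
    ∑ m, brDiag z w m a b * f m = kd z a * w b * f b - kd z b * w a * f a := by
  simp [brDiag, kd, mul_sub, sub_mul, Finset.sum_sub_distrib]

/-- `dα = Dα ∧ e^z`, where `D = diagDeriv3 w` is the action of the derivation `ad e_z` on forms. -/
theorem d3_brDiag {n : ℕ} (z : Fin n) (w : Fin n → ℝ) {α : Fin n → Fin n → Fin n → ℝ}
    (hα : IsAlt3 α) (a b c d : Fin n) :
    d3 (brDiag z w) α a b c d = w31 (diagDeriv3 w α) (kd z) a b c d := by
  simp only [d3, w31, diagDeriv3, sum_brDiag_mul]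
  rw [hα.swap_left b c d, hα.swap_left a c d, hα.swap_left a b d, hα.swap_left a b c,
    hα.cycle b c d, hα.cycle a c d, hα.cycle a b d, hα.cycle a b c]
  ring

theorem w31_kd_eq_zero {n : ℕ} {β : Fin n → Fin n → Fin n → ℝ} (hβ : IsAlt3 β) {z : Fin n}
    (hz : ∀ i j k, i ≠ z → j ≠ z → k ≠ z → β i j k = 0) (a b c d : Fin n) :
    w31 β (kd z) a b c d = 0 := by
  unfold w31
  -- moving `z` into the middle slot makes the terms that must cancel syntactically equal
  by_cases ha : a = z <;> by_cases hb : b = z <;> by_cases hc : c = z <;> by_cases hd : d = z <;>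
    simp [kd, Ne.symm, *, hβ.apply_self_left, hβ.apply_self_right, hβ.apply_self_outer,
      hβ.swap_left _ z, hβ.swap_right _ z]

theorem d3_brDiag_eq_zero {n : ℕ} (z : Fin n) (w : Fin n → ℝ) {α : Fin n → Fin n → Fin n → ℝ}
    (hα : IsAlt3 α)
    (hw : ∀ i j k, i ≠ z → j ≠ z → k ≠ z → (w i + w j + w k) * α i j k = 0)
    (a b c d : Fin n) : d3 (brDiag z w) α a b c d = 0 := by
  rw [d3_brDiag z w hα]
  exact w31_kd_eq_zero (hα.diagDeriv3 w) hw a b c d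

theorem tripF_eq_kd {n : ℕ} (p q r i j k : Fin n) :
    tripF p q r i j k =
      kd p i * kd q j * kd r k - kd p i * kd q k * kd r j - kd p j * kd q i * kd r k
      + kd p j * kd q k * kd r i + kd p k * kd q i * kd r j - kd p k * kd q j * kd r i := by
  rw [tripF, Matrix.det_fin_three]
  simp only [Matrix.of_apply, Matrix.cons_val', Matrix.cons_val_zero, Matrix.cons_val_one,
    Matrix.cons_val_two, Matrix.empty_val', Matrix.cons_val_fin_one, Matrix.head_cons,
    Matrix.tail_cons, Matrix.head_fin_const]

theorem tripF_isAlt3 {n : ℕ} (p q r : Fin n) : IsAlt3 (tripF p q r) where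
  swap_left i j k := by rw [tripF_eq_kd, tripF_eq_kd]; ring
  swap_right i j k := by rw [tripF_eq_kd, tripF_eq_kd]; ring

theorem tripF_eq_zero_of_ne {n : ℕ} {p q r i j k : Fin n} (hi : r ≠ i) (hj : r ≠ j)
    (hk : r ≠ k) : tripF p q r i j k = 0 := by
  simp [tripF_eq_kd, kd, hi, hj, hk]

theorem add_mul_tripF {n : ℕ} (f : Fin n → ℝ) (p q r i j k : Fin n) :
    (f i + f j + f k) * tripF p q r i j k = (f p + f q + f r) * tripF p q r i j k := by
  have monomial : ∀ i j k, (f i + f j + f k) * (kd p i * kd q j * kd r k) =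
      (f p + f q + f r) * (kd p i * kd q j * kd r k) := by
    intro i j k
    unfold kd
    split_ifs <;> subst_vars <;> simp
  rw [tripF_eq_kd]
  linear_combination monomial i j k - monomial i k j - monomial j i k + monomial j k i
    + monomial k i j - monomial k j i

/-- `de^i = weight2 i • e^i ∧ e^6` for `br2` (0-indexed). -/
def weight2 : Fin 7 → ℝ := ![1, 1, -1, -1, 0, 0, 0]

theorem br2_eq_brDiag : br2 = brDiag 6 weight2 := by
  funext m a b
  fin_cases m <;>
    simp only [br2, bb2, brDiag, weight2, kd, Fin.isValue, Fin.reduceFinMk, Fin.zero_eta,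
      Fin.mk_one, Matrix.cons_val, Matrix.cons_val_zero, Matrix.cons_val_one] <;>
    grind

theorem phi2_isAlt3 : IsAlt3 phi2 where
  swap_left i j k := by simp only [phi2, (tripF_isAlt3 _ _ _).swap_left i j k]; ring
  swap_right i j k := by simp only [phi2, (tripF_isAlt3 _ _ _).swap_right i j k]; ring

theorem phi2_weight_zero (i j k : Fin 7) (hi : i ≠ 6) (hj : j ≠ 6) (hk : k ≠ 6) :
    (weight2 i + weight2 j + weight2 k) * phi2 i j k = 0 := by
  simp only [phi2, mul_add, mul_sub, add_mul_tripF weight2 _ _ _ i j k,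
    tripF_eq_zero_of_ne hi.symm hj.symm hk.symm]
  simp [weight2]

theorem stmt_2 : ∀ a b c d : Fin 7, d3 br2 phi2 a b c d = 0 := by
  rw [br2_eq_brDiag]
  exact d3_brDiag_eq_zero 6 weight2 phi2_isAlt3 phi2_weight_zero
end

section
/- On the 7-dimensional nilpotent Lie algebra g with structure equations de¹ = de² = 0, de³ = e^{17}, de⁴ = e^{15} + e^{27}, de⁵ = 0, de⁶ = e^{13}, de⁷ = 0, the G₂-form φ = e^{127} + e^{347} + e^{567} + e^{135} − e^{146} − e^{236} − e^{245} is closed: dφ = 0. -/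
open Finset BigOperators

/-- Structure constants of `(0, 0, e^{17}, e^{15}+e^{27}, 0, e^{13}, 0)`. -/
def bb4 : Fin 7 → Fin 7 → Fin 7 → ℝ := fun i a b =>
  if i = 2 ∧ a = 0 ∧ b = 6 then -1
  else if i = 3 ∧ a = 0 ∧ b = 4 then -1
  else if i = 3 ∧ a = 1 ∧ b = 6 then -1
  else if i = 5 ∧ a = 0 ∧ b = 2 then -1
  else 0

def br4 : Fin 7 → Fin 7 → Fin 7 → ℝ := fun i a b => bb4 i a b - bb4 i b a

/-- `φ = e^{127}+e^{347}+e^{567}+e^{135}−e^{146}−e^{236}−e^{245}` (0-indexed). -/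
def phi4 : Fin 7 → Fin 7 → Fin 7 → ℝ := fun i j k =>
  tripF 0 1 6 i j k + tripF 2 3 6 i j k + tripF 4 5 6 i j k + psi7 i j k

/-!
Since `d` is a graded derivation, `dφ` is computed termwise from the only non-closed basis
forms, `de³ = e¹⁷`, `de⁴ = e¹⁵ + e²⁷` and `de⁶ = e¹³`: the contributions `±e¹³⁵⁷` of `e³⁴⁷` and
`e⁵⁶⁷` cancel, as do the contributions `±e¹²⁶⁷` of `e¹⁴⁶` and `e²³⁶`, and all other terms
contain a repeated factor.
-/

/-- `d e^a` as a 2-form, with the sign convention `dα(x, y) = -α([x, y])` of `d2`–`d4`. -/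
def dBasis {n : ℕ} (br : Fin n → Fin n → Fin n → ℝ) (a : Fin n) : Fin n → Fin n → ℝ :=
  fun x y => -br a x y

theorem tripF_expand_column_zero {n : ℕ} (a b c m z w : Fin n) :
    tripF a b c m z w =
      kd a m * pairF b c z w - kd b m * pairF a c z w + kd c m * pairF a b z w := by
  simp [tripF, Matrix.det_fin_three, pairF]
  ring

theorem sum_mul_tripF {n : ℕ} (br : Fin n → Fin n → Fin n → ℝ) (a b c x y z w : Fin n) :
    ∑ m, br m x y * tripF a b c m z w =
      br a x y * pairF b c z w - br b x y * pairF a c z w + br c x y * pairF a b z w := by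
  simp only [tripF_expand_column_zero, mul_add, mul_sub, sum_add_distrib, sum_sub_distrib]
  simp [kd]

theorem d3_add {n : ℕ} (br : Fin n → Fin n → Fin n → ℝ) (α β : Fin n → Fin n → Fin n → ℝ) :
    d3 br (α + β) = d3 br α + d3 br β := by
  funext a b c d
  simp only [d3, Pi.add_apply, mul_add, sum_add_distrib]
  ring

theorem d3_sub {n : ℕ} (br : Fin n → Fin n → Fin n → ℝ) (α β : Fin n → Fin n → Fin n → ℝ) :
    d3 br (α - β) = d3 br α - d3 br β := by
  funext a b c d
  simp only [d3, Pi.sub_apply, mul_sub, sum_sub_distrib]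
  ring

theorem d3_tripF {n : ℕ} (br : Fin n → Fin n → Fin n → ℝ) (a b c : Fin n) :
    d3 br (tripF a b c) =
      w22 (dBasis br a) (pairF b c) - w22 (dBasis br b) (pairF a c)
        + w22 (dBasis br c) (pairF a b) := by
  funext p q r s
  simp only [d3, sum_mul_tripF, w22, dBasis, Pi.add_apply, Pi.sub_apply]
  ring

theorem phi4_eq : phi4 = tripF 0 1 6 + tripF 2 3 6 + tripF 4 5 6 +
    (tripF 0 2 4 - tripF 0 3 5 - tripF 1 2 5 - tripF 1 3 4) := rfl

theorem dBasis_br4 :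
    dBasis br4 = ![0, 0, pairF 0 6, pairF 0 4 + pairF 1 6, 0, pairF 0 2, 0] := by
  funext i x y
  fin_cases i <;> fin_cases x <;> fin_cases y <;> simp [dBasis, br4, bb4, pairF, kd]

theorem stmt_4 : ∀ a b c d : Fin 7, d3 br4 phi4 a b c d = 0 := by
  intro a b c d
  simp only [phi4_eq, d3_add, d3_sub, d3_tripF, dBasis_br4, Pi.add_apply, Pi.sub_apply]
  -- what is left is a polynomial identity in the atoms `kd r a`, `kd r b`, `kd r c`, `kd r d`
  simp only [w22, pairF, Matrix.cons_val', Matrix.cons_val_fin_one, Matrix.cons_val_zero,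
    Matrix.cons_val_one, Matrix.cons_val, Pi.zero_apply, Pi.add_apply]
  ring
end

section
/- On the 6-dimensional nilpotent Lie algebra h with structure equations de¹ = de² = de³ = 0, de⁴ = e^{15}, de⁵ = 0, de⁶ = e^{13}, the pair ω = e^{12} + e^{34} + e^{56} and ψ₊ = e^{135} − e^{146} − e^{236} − e^{245} satisfies dω = 0 and dψ₊ = 0 (i.e., the SU(3)-structure is symplectic half-flat). -/
open Finset BigOperators

/-- Structure constants of `h = (0, 0, 0, e^{15}, 0, e^{13})`. -/
def bb5 : Fin 6 → Fin 6 → Fin 6 → ℝ := fun i a b =>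
  if i = 3 ∧ a = 0 ∧ b = 4 then -1
  else if i = 5 ∧ a = 0 ∧ b = 2 then -1
  else 0

def br5 : Fin 6 → Fin 6 → Fin 6 → ℝ := fun i a b => bb5 i a b - bb5 i b a

/- The differential of `h` is `dα = e^{15} ∧ ι_{e₄} α + e^{13} ∧ ι_{e₆} α`, since `e⁴` and `e⁶` are the only
non-closed generators. The contractions are `ι_{e₄} ω = -e³`, `ι_{e₆} ω = -e⁵`, `ι_{e₄} ψ₊ = e^{16} + e^{25}` and
`ι_{e₆} ψ₊ = -e^{14} - e^{23}`, so `dω = -e^{153} - e^{135}` and every term of `dψ₊` repeats `e¹` or `e³`.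
Indices in the code are these shifted down by one. -/

lemma sum_br5_mul (a b : Fin 6) (f : Fin 6 → ℝ) :
    ∑ m, br5 m a b * f m = -(pairF 0 4 a b * f 3 + pairF 0 2 a b * f 5) := by
  fin_cases a <;> fin_cases b <;> simp [br5, bb5, pairF, kd]

lemma d2_br5 (α : Fin 6 → Fin 6 → ℝ) (a b c : Fin 6) :
    d2 br5 α a b c = w21 (pairF 0 4) (α 3) a b c + w21 (pairF 0 2) (α 5) a b c := by
  simp only [d2, sum_br5_mul, w21]
  ring

lemma d3_br5 (α : Fin 6 → Fin 6 → Fin 6 → ℝ) (a b c d : Fin 6) :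
    d3 br5 α a b c d = w22 (pairF 0 4) (α 3) a b c d + w22 (pairF 0 2) (α 5) a b c d := by
  simp only [d3, sum_br5_mul, w22]
  ring

lemma tripF_eq {n : ℕ} (a b c i j k : Fin n) : tripF a b c i j k =
    kd a i * pairF b c j k - kd a j * pairF b c i k + kd a k * pairF b c i j := by
  simp only [tripF, Matrix.det_fin_three, Matrix.of_apply, Matrix.cons_val', Matrix.cons_val_zero,
    Matrix.cons_val_fin_one, Matrix.cons_val_one, Matrix.cons_val, pairF]
  ring

lemma omega6_three : omega6 3 = fun c => -kd 2 c := by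
  ext c
  simp [omega6, pairF, kd]

lemma omega6_five : omega6 5 = fun c => -kd 4 c := by
  ext c
  simp [omega6, pairF, kd]

lemma psi6_three : psi6 3 = fun c d => pairF 0 5 c d + pairF 1 4 c d := by
  ext c d
  simp only [psi6, tripF_eq, pairF, kd, Fin.reduceEq, ↓reduceIte]
  ring

lemma psi6_five : psi6 5 = fun c d => -(pairF 0 3 c d + pairF 1 2 c d) := by
  ext c d
  simp only [psi6, tripF_eq, pairF, kd, Fin.reduceEq, ↓reduceIte]
  ring

/-- `(ω, ψ₊)` is symplectic half-flat on `h`: `dω = 0` and `dψ₊ = 0`. -/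
theorem stmt_5 :
    (∀ a b c : Fin 6, d2 br5 omega6 a b c = 0) ∧
    (∀ a b c d : Fin 6, d3 br5 psi6 a b c d = 0) := by
  refine ⟨fun a b c => ?_, fun a b c d => ?_⟩
  · rw [d2_br5, omega6_three, omega6_five]
    simp only [w21, pairF]
    ring
  · rw [d3_br5, psi6_three, psi6_five]
    simp only [w22, pairF]
    ring
end

section
/- On the 6-dimensional Lie algebra h with structure equations de¹ = e^{35} + e^{46}, de² = de³ = de⁴ = de⁵ = de⁶ = 0, the forms ω = e^{12} + e^{34} + e^{56} and ψ₊ = e^{135} − e^{146} − e^{236} − e^{245} satisfy d(ω ∧ ω) = 0 and dψ₊ = 0 (i.e., the structure is half-flat). -/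
open Finset BigOperators

/-- Structure constants of `h = (e^{35}+e^{46}, 0, 0, 0, 0, 0)`. -/
def bb6 : Fin 6 → Fin 6 → Fin 6 → ℝ := fun i a b =>
  if i = 0 ∧ a = 2 ∧ b = 4 then -1
  else if i = 0 ∧ a = 3 ∧ b = 5 then -1
  else 0

def br6 : Fin 6 → Fin 6 → Fin 6 → ℝ := fun i a b => bb6 i a b - bb6 i b a

/-!
The only nonzero differential of `h` is `de¹ = θ := e^{35} + e^{46}`, so on every form
`dα = θ ∧ ι_{e₁} α`. Now `ι_{e₁} ψ₊ = e^{35} − e^{46}`, and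
`θ ∧ (e^{35} − e^{46}) = e^{35} ∧ e^{35} − e^{46} ∧ e^{46} = 0`; while
`ι_{e₁} (ω ∧ ω) = 2 ω ∧ e²`, and every term of `θ ∧ ω ∧ e²` repeats an index.
-/

def w23 {n : ℕ} (α : Fin n → Fin n → ℝ) (β : Fin n → Fin n → Fin n → ℝ) (a b c d e : Fin n) : ℝ :=
  α a b * β c d e - α a c * β b d e + α a d * β b c e - α a e * β b c d + α b c * β a d e
  - α b d * β a c e + α b e * β a c d + α c d * β a b e - α c e * β a b d + α d e * β a b c

section SingleDifferential

variable {n : ℕ} {br : Fin n → Fin n → Fin n → ℝ} {θ : Fin n → Fin n → ℝ} {z : Fin n}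

/- The hypothesis `hbr` below says that `de^z = θ` and `de^m = 0` for `m ≠ z`, since
`de^m (e_a, e_b) = -e^m [e_a, e_b] = -br m a b`. -/

theorem sum_bracket_mul (hbr : ∀ m a b, br m a b = -(kd z m * θ a b)) (f : Fin n → ℝ)
    (a b : Fin n) : ∑ m, br m a b * f m = -(θ a b * f z) := by
  simp [hbr, kd]

theorem d3_eq_w22 (hbr : ∀ m a b, br m a b = -(kd z m * θ a b))
    (α : Fin n → Fin n → Fin n → ℝ) (a b c d : Fin n) :
    d3 br α a b c d = w22 θ (α z) a b c d := by
  simp only [d3, sum_bracket_mul hbr, w22]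
  ring

theorem d4_eq_w23 (hbr : ∀ m a b, br m a b = -(kd z m * θ a b))
    (α : Fin n → Fin n → Fin n → Fin n → ℝ) (a b c d e : Fin n) :
    d4 br α a b c d e = w23 θ (α z) a b c d e := by
  simp only [d4, sum_bracket_mul hbr, w23]
  ring

end SingleDifferential

theorem w23_smul_right {n : ℕ} (α : Fin n → Fin n → ℝ) (r : ℝ) (β : Fin n → Fin n → Fin n → ℝ)
    (a b c d e : Fin n) : w23 α (r • β) a b c d e = r * w23 α β a b c d e := by
  simp only [w23, Pi.smul_apply, smul_eq_mul]
  ring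

theorem w22_self_apply {n : ℕ} (α : Fin n → Fin n → ℝ) (z : Fin n) :
    w22 α α z = (2 : ℝ) • w21 α (α z) := by
  ext c d e
  simp only [w22, w21, Pi.smul_apply, smul_eq_mul]
  ring

theorem w22_pairF_add_pairF_sub {n : ℕ} (a b c d i j k l : Fin n) :
    w22 (pairF a b + pairF c d) (pairF a b - pairF c d) i j k l = 0 := by
  simp only [w22, pairF, Pi.add_apply, Pi.sub_apply]
  ring

/-- `de¹ = e^{35} + e^{46}`, written with the 0-based indices of `Fin 6`. -/
def theta6 : Fin 6 → Fin 6 → ℝ := pairF 2 4 + pairF 3 5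

theorem br6_eq (m a b : Fin 6) : br6 m a b = -(kd 0 m * theta6 a b) := by
  fin_cases m <;> fin_cases a <;> fin_cases b <;> simp [br6, bb6, kd, theta6, pairF]

theorem omega6_zero : omega6 0 = kd 1 := by
  ext j
  simp [omega6, pairF, kd]

theorem psi6_zero : psi6 0 = pairF 2 4 - pairF 3 5 := by
  ext j k
  simp [psi6, tripF, pairF, kd, Matrix.det_fin_three]

theorem w23_theta6_w21_omega6_kd_one (a b c d e : Fin 6) :
    w23 theta6 (w21 omega6 (kd 1)) a b c d e = 0 := by
  simp only [w23, w21, theta6, omega6, pairF, Pi.add_apply]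
  ring

/-- `(ω, ψ₊)` is half-flat on `h`: `d(ω ∧ ω) = 0` and `dψ₊ = 0`. -/
theorem stmt_6 :
    (∀ a b c d e : Fin 6, d4 br6 (w22 omega6 omega6) a b c d e = 0) ∧
    (∀ a b c d : Fin 6, d3 br6 psi6 a b c d = 0) := by
  constructor
  · intro a b c d e
    rw [d4_eq_w23 br6_eq, w22_self_apply, omega6_zero, w23_smul_right,
      w23_theta6_w21_omega6_kd_one, mul_zero]
  · intro a b c d
    rw [d3_eq_w22 br6_eq, psi6_zero]
    exact w22_pairF_add_pairF_sub 2 4 3 5 a b c d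
end

section
/- On the 7-dimensional completely solvable Lie algebra g with structure equations de¹ = e^{17}, de² = −e^{27}, de³ = e^{37}, de⁴ = −e^{47}, de⁵ = e^{57}, de⁶ = −e^{67}, de⁷ = 0, the 4-form (1/2)ω∧ω + ψ₊∧e⁷, where ω = e^{12}+e^{34}+e^{56} and ψ₊ = e^{135}−e^{146}−e^{236}−e^{245}, is closed; hence the G₂-form φ = ω∧e⁷ − ψ₋ with ψ₋ = e^{136}+e^{145}+e^{235}−e^{246} is coclosed. -/
open Finset BigOperators

/-- Structure constants of `g = (e^{17}, −e^{27}, e^{37}, −e^{47}, e^{57}, −e^{67}, 0)`. -/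
def bb8 : Fin 7 → Fin 7 → Fin 7 → ℝ := fun i a b =>
  if i = 0 ∧ a = 0 ∧ b = 6 then -1
  else if i = 1 ∧ a = 1 ∧ b = 6 then 1
  else if i = 2 ∧ a = 2 ∧ b = 6 then -1
  else if i = 3 ∧ a = 3 ∧ b = 6 then 1
  else if i = 4 ∧ a = 4 ∧ b = 6 then -1
  else if i = 5 ∧ a = 5 ∧ b = 6 then 1
  else 0

def br8 : Fin 7 → Fin 7 → Fin 7 → ℝ := fun i a b => bb8 i a b - bb8 i b a

/-- The 4-form `(1/2) ω∧ω + ψ₊∧e⁷`. -/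
noncomputable def F8 : Fin 7 → Fin 7 → Fin 7 → Fin 7 → ℝ := fun i j k l =>
  (1 / 2) * w22 omega7 omega7 i j k l + w31 psi7 eta7 i j k l

/-! The algebra is `ℝ⁶ ⋊ ℝ e₇` with `e₇` acting diagonally, so the differential of a form is its
weight (the sum of the weights of its indices) times its wedge with `e⁷`. Hence `ω ∧ ω`, which has
weight zero, is closed, and `d(ψ₊ ∧ e⁷)` is a multiple of `e⁷ ∧ ψ₊ ∧ e⁷ = 0`. -/

section AlternatingForms

variable {n : ℕ}

def IsAlt2 (α : Fin n → Fin n → ℝ) : Prop := ∀ i j, α j i = -α i j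

def IsAlt3_s8 (α : Fin n → Fin n → Fin n → ℝ) : Prop :=
  (∀ i j k, α j i k = -α i j k) ∧ ∀ i j k, α i k j = -α i j k

def IsAlt4 (α : Fin n → Fin n → Fin n → Fin n → ℝ) : Prop :=
  (∀ i j k l, α j i k l = -α i j k l) ∧ (∀ i j k l, α i k j l = -α i j k l) ∧
    ∀ i j k l, α i j l k = -α i j k l

namespace IsAlt4

variable {α : Fin n → Fin n → Fin n → Fin n → ℝ}

theorem swap (h : IsAlt4 α) (i j k l : Fin n) : α j i k l = -α i j k l := h.1 i j k l

theorem cycle₃ (h : IsAlt4 α) (i j k l : Fin n) : α k i j l = α i j k l := by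
  rw [h.1 i k j l, h.2.1 i j k l, neg_neg]

theorem cycle₄ (h : IsAlt4 α) (i j k l : Fin n) : α l i j k = -α i j k l := by
  rw [h.1 i l j k, h.2.1 i j l k, h.2.2 i j k l, neg_neg]

theorem const_mul (h : IsAlt4 α) (r : ℝ) : IsAlt4 fun i j k l => r * α i j k l := by
  refine ⟨fun i j k l => ?_, fun i j k l => ?_, fun i j k l => ?_⟩ <;> dsimp only
  · rw [h.1]; ring
  · rw [h.2.1]; ring
  · rw [h.2.2]; ring

end IsAlt4

theorem IsAlt2.w22 {α β : Fin n → Fin n → ℝ} (hα : IsAlt2 α) (hβ : IsAlt2 β) :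
    IsAlt4 (w22 α β) := by
  refine ⟨fun i j k l => ?_, fun i j k l => ?_, fun i j k l => ?_⟩ <;> simp only [_root_.w22]
  · rw [hα i j, hβ i j]; ring
  · rw [hα j k, hβ j k]; ring
  · rw [hα k l, hβ k l]; ring

theorem IsAlt3_s8.w31 {β : Fin n → Fin n → Fin n → ℝ} (hβ : IsAlt3_s8 β) (η : Fin n → ℝ) :
    IsAlt4 (w31 β η) := by
  refine ⟨fun i j k l => ?_, fun i j k l => ?_, fun i j k l => ?_⟩ <;> simp only [_root_.w31]
  · rw [hβ.1 i j k, hβ.1 i j l]; ring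
  · rw [hβ.2 i j k, hβ.1 j k l]; ring
  · rw [hβ.2 i k l, hβ.2 j k l]; ring

def w14 (η : Fin n → ℝ) (α : Fin n → Fin n → Fin n → Fin n → ℝ) (a b c d e : Fin n) : ℝ :=
  η a * α b c d e - η b * α a c d e + η c * α a b d e - η d * α a b c e + η e * α a b c d

theorem w14_w31_self (η : Fin n → ℝ) (β : Fin n → Fin n → Fin n → ℝ) (a b c d e : Fin n) :
    w14 η (w31 β η) a b c d e = 0 := by
  simp only [w14, w31]
  ring

theorem pairF_weight (s : Fin n → ℝ) (a b i j : Fin n) :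
    (s i + s j) * pairF a b i j = (s a + s b) * pairF a b i j := by
  simp only [pairF, kd]
  split_ifs <;> subst_vars <;> ring

theorem w22_weight_eq_zero (s : Fin n → ℝ) {α β : Fin n → Fin n → ℝ}
    (hα : ∀ i j, (s i + s j) * α i j = 0) (hβ : ∀ i j, (s i + s j) * β i j = 0)
    (i j k l : Fin n) : (s i + s j + s k + s l) * w22 α β i j k l = 0 := by
  rw [w22]
  linear_combination β k l * hα i j + α i j * hβ k l - β j l * hα i k - α i k * hβ j l
    + β j k * hα i l + α i l * hβ j k + β i l * hα j k + α j k * hβ i l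
    - β i k * hα j l - α j l * hβ i k + β i j * hα k l + α k l * hβ i j

end AlternatingForms

section DiagonalAlgebra

variable {n : ℕ}

theorem d4_add (br : Fin n → Fin n → Fin n → ℝ) (α β : Fin n → Fin n → Fin n → Fin n → ℝ)
    (a b c d e : Fin n) : d4 br (α + β) a b c d e = d4 br α a b c d e + d4 br β a b c d e := by
  simp only [d4, Pi.add_apply, mul_add, sum_add_distrib]
  ring

/-- `[e_x, e_t] = s x • e_x` for `x ≠ t`, all other brackets zero: the semidirect product
`ℝⁿ⁻¹ ⋊ ℝ e_t` with `e_t` acting diagonally. -/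
def diagBracket (s : Fin n → ℝ) (t : Fin n) : Fin n → Fin n → Fin n → ℝ := fun m x y =>
  s x * kd m x * kd t y - s y * kd m y * kd t x

theorem sum_diagBracket_mul (s : Fin n → ℝ) (t x y : Fin n) (g : Fin n → ℝ) :
    ∑ m, diagBracket s t m x y * g m = s x * kd t y * g x - s y * kd t x * g y := by
  simp [diagBracket, sub_mul, sum_sub_distrib, kd]

theorem d4_diagBracket (s : Fin n → ℝ) (t : Fin n) {α : Fin n → Fin n → Fin n → Fin n → ℝ}
    (hα : IsAlt4 α) (a b c d e : Fin n) :
    d4 (diagBracket s t) α a b c d e =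
      kd t a * (s b + s c + s d + s e) * α b c d e - kd t b * (s a + s c + s d + s e) * α a c d e
      + kd t c * (s a + s b + s d + s e) * α a b d e - kd t d * (s a + s b + s c + s e) * α a b c e
      + kd t e * (s a + s b + s c + s d) * α a b c d := by
  simp only [d4, sum_diagBracket_mul]
  rw [hα.swap b c d e, hα.swap a b d e, hα.swap a c d e, hα.swap a b c e, hα.swap a b c d,
    hα.cycle₃ b c d e, hα.cycle₃ a c d e, hα.cycle₃ a b c e, hα.cycle₃ a b d e, hα.cycle₃ a b c d,
    hα.cycle₄ b c d e, hα.cycle₄ a c d e, hα.cycle₄ a b d e, hα.cycle₄ a b c d, hα.cycle₄ a b c e]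
  ring

theorem d4_diagBracket_eq_zero_of_weight_eq_zero (s : Fin n → ℝ) (t : Fin n)
    {α : Fin n → Fin n → Fin n → Fin n → ℝ} (hα : IsAlt4 α)
    (hw : ∀ i j k l, (s i + s j + s k + s l) * α i j k l = 0) (a b c d e : Fin n) :
    d4 (diagBracket s t) α a b c d e = 0 := by
  simp only [d4_diagBracket s t hα, mul_assoc, hw, mul_zero, sub_zero, add_zero]

theorem d4_diagBracket_eq_mul_w14 {s : Fin n → ℝ} {t : Fin n} (hst : s t = 0)
    {α : Fin n → Fin n → Fin n → Fin n → ℝ} (hα : IsAlt4 α) (a b c d e : Fin n) :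
    d4 (diagBracket s t) α a b c d e =
      (s a + s b + s c + s d + s e) * w14 (kd t) α a b c d e := by
  have h : ∀ x, s x * kd t x = 0 := fun x => by
    by_cases hx : t = x
    · rw [← hx, hst, zero_mul]
    · rw [kd, if_neg hx, mul_zero]
  rw [d4_diagBracket s t hα, w14]
  linear_combination -α b c d e * h a + α a c d e * h b - α a b d e * h c + α a b c e * h d
    - α a b c d * h e

theorem d4_diagBracket_w31_eq_zero {s : Fin n → ℝ} {t : Fin n} (hst : s t = 0)
    {β : Fin n → Fin n → Fin n → ℝ} (hβ : IsAlt3_s8 β) (a b c d e : Fin n) :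
    d4 (diagBracket s t) (w31 β (kd t)) a b c d e = 0 := by
  rw [d4_diagBracket_eq_mul_w14 hst (hβ.w31 _), w14_w31_self, mul_zero]

end DiagonalAlgebra

/-- `e^i([e_i, e₇]) = weight8 i`, i.e. `de^i = -weight8 i • e^{i7}`. -/
def weight8 : Fin 7 → ℝ := ![-1, 1, -1, 1, -1, 1, 0]

theorem br8_eq_diagBracket : br8 = diagBracket weight8 6 := by
  have hbb : ∀ m x y, bb8 m x y = weight8 x * kd m x * kd 6 y := by
    intro m x y
    fin_cases m <;> fin_cases x <;> simp [bb8, kd, weight8, eq_comm]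
  funext m x y
  simp only [br8, hbb, diagBracket]

theorem omega7_isAlt2 : IsAlt2 omega7 := fun i j => by
  simp only [omega7, pairF]
  ring

theorem omega7_weight_eq_zero (i j : Fin 7) : (weight8 i + weight8 j) * omega7 i j = 0 := by
  rw [omega7, mul_add, mul_add, pairF_weight weight8 0 1, pairF_weight weight8 2 3,
    pairF_weight weight8 4 5]
  simp [weight8]

theorem psi7_isAlt3 : IsAlt3_s8 psi7 := by
  refine ⟨fun i j k => ?_, fun i j k => ?_⟩ <;>
    simp only [psi7, tripF, Matrix.det_fin_three, Matrix.of_apply, Matrix.cons_val',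
      Matrix.cons_val_zero, Matrix.cons_val_one, Matrix.cons_val_two, Matrix.empty_val',
      Matrix.cons_val_fin_one, Matrix.head_cons, Matrix.tail_cons] <;> ring

/-- `d((1/2) ω∧ω + ψ₊∧e⁷) = 0`, i.e. the G₂-form `ω∧e⁷ − ψ₋` is coclosed. -/
theorem stmt_8 : ∀ a b c d e : Fin 7, d4 br8 F8 a b c d e = 0 := by
  intro a b c d e
  have hF : F8 = (fun i j k l => 1 / 2 * w22 omega7 omega7 i j k l) + w31 psi7 (kd 6) := rfl
  have hωω : ∀ i j k l, (weight8 i + weight8 j + weight8 k + weight8 l) *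
      (1 / 2 * w22 omega7 omega7 i j k l) = 0 := fun i j k l => by
    rw [mul_left_comm, w22_weight_eq_zero _ omega7_weight_eq_zero omega7_weight_eq_zero, mul_zero]
  have hωωAlt := (omega7_isAlt2.w22 omega7_isAlt2).const_mul (1 / 2)
  rw [br8_eq_diagBracket, hF, d4_add, d4_diagBracket_eq_zero_of_weight_eq_zero _ _ hωωAlt hωω,
    d4_diagBracket_w31_eq_zero (by rfl) psi7_isAlt3, add_zero]
end

section
/- Let h be a 6-dimensional Lie algebra with a basis {e₁,…,e₆} such that ω = e^{12}+e^{34}+e^{56} and ψ₊ = e^{135}−e^{146}−e^{236}−e^{245} are closed (symplectic half-flat), and let D be a derivation of h which, in this basis, is the real representation of some A ∈ sl(3,ℂ). Then on the semidirect sum Lie algebra g = h ⊕_D ℝξ (with bracket [ξ,U] = D(U) for U ∈ h, and the bracket of h on h), the 3-form φ = ω∧η + ψ₊ is closed, where η is the dual of ξ extended by zero on h. -/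
/-!
On `g = h ⊕ ℝξ` no bracket has a `ξ`-component, so `dη = 0`, and `dφ` restricted to `h` is
`dψ₊ = 0`. Evaluated on `X, Y, Z ∈ h` and `ξ`, it is
`dω(X,Y,Z) + ψ₊(DX,Y,Z) + ψ₊(X,DY,Z) + ψ₊(X,Y,DZ)`.
The first term vanishes because `ω` is closed on `h`. For the rest, `ψ₊` is the real part of the
complex volume form `Ψ = θ¹ ∧ θ² ∧ θ³`, `θᵖ = e^{2p-1} + i e^{2p}`; the real representation of `A`
acts on the `θᵖ` by the conjugate matrix `Ā`, so it acts on `Ψ` as multiplication by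
`tr Ā = 0`. Antisymmetry of `dφ` reduces every other evaluation to these two.
-/

open Finset BigOperators

open Matrix

theorem kd_self {n : ℕ} (a : Fin n) : kd a a = 1 := if_pos rfl

theorem kd_of_ne {n : ℕ} {a i : Fin n} (h : a ≠ i) : kd a i = 0 := if_neg h

theorem kd_castSucc {n : ℕ} (a i : Fin n) : kd a.castSucc i.castSucc = kd a i := by
  simp [kd]

theorem kd_last_castSucc {n : ℕ} (i : Fin n) : kd (Fin.last n) i.castSucc = 0 := by
  simp [kd, ne_of_gt]

section Alternation

variable {n : ℕ} {br : Fin n → Fin n → Fin n → ℝ} {α : Fin n → Fin n → Fin n → ℝ}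

theorem d3_swap_01 (hbr : ∀ m x y, br m x y = -br m y x) (hα : ∀ m x y, α m x y = -α m y x)
    (a b c d : Fin n) : d3 br α b a c d = -d3 br α a b c d := by
  simp only [d3, hbr _ b a, hα _ b a, neg_mul, mul_neg, sum_neg_distrib]
  ring

theorem d3_swap_12 (hbr : ∀ m x y, br m x y = -br m y x) (hα : ∀ m x y, α m x y = -α m y x)
    (a b c d : Fin n) : d3 br α a c b d = -d3 br α a b c d := by
  simp only [d3, hbr _ c b, hα _ c b, neg_mul, mul_neg, sum_neg_distrib]
  ring

theorem d3_swap_23 (hbr : ∀ m x y, br m x y = -br m y x) (hα : ∀ m x y, α m x y = -α m y x)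
    (a b c d : Fin n) : d3 br α a b d c = -d3 br α a b c d := by
  simp only [d3, hbr _ d c, hα _ d c, neg_mul, mul_neg, sum_neg_distrib]
  ring

end Alternation

theorem eq_zero_of_castSucc_of_last {n : ℕ}
    {F : Fin (n + 1) → Fin (n + 1) → Fin (n + 1) → Fin (n + 1) → ℝ}
    (h01 : ∀ a b c d, F b a c d = -F a b c d) (h12 : ∀ a b c d, F a c b d = -F a b c d)
    (h23 : ∀ a b c d, F a b d c = -F a b c d)
    (hcs : ∀ a b c d : Fin n, F a.castSucc b.castSucc c.castSucc d.castSucc = 0)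
    (hlast : ∀ a b c : Fin n, F a.castSucc b.castSucc c.castSucc (Fin.last n) = 0)
    (a b c d : Fin (n + 1)) : F a b c d = 0 := by
  have hlast' : ∀ a b c, F a b c (Fin.last n) = 0 := by
    intro a b c
    rcases Fin.eq_castSucc_or_eq_last c with ⟨c, rfl⟩ | rfl
    · rcases Fin.eq_castSucc_or_eq_last b with ⟨b, rfl⟩ | rfl
      · rcases Fin.eq_castSucc_or_eq_last a with ⟨a, rfl⟩ | rfl
        · exact hlast a b c
        · linarith [h01 b.castSucc (Fin.last n) c.castSucc (Fin.last n),
            h12 b.castSucc c.castSucc (Fin.last n) (Fin.last n),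
            h23 b.castSucc c.castSucc (Fin.last n) (Fin.last n)]
      · linarith [h12 a c.castSucc (Fin.last n) (Fin.last n),
          h23 a c.castSucc (Fin.last n) (Fin.last n)]
    · linarith [h23 a b (Fin.last n) (Fin.last n)]
  rcases Fin.eq_castSucc_or_eq_last d with ⟨d, rfl⟩ | rfl
  · rcases Fin.eq_castSucc_or_eq_last c with ⟨c, rfl⟩ | rfl
    · rcases Fin.eq_castSucc_or_eq_last b with ⟨b, rfl⟩ | rfl
      · rcases Fin.eq_castSucc_or_eq_last a with ⟨a, rfl⟩ | rfl
        · exact hcs a b c d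
        · rw [h01, h12, h23, hlast', neg_zero, neg_zero, neg_zero]
      · rw [h12, h23, hlast', neg_zero, neg_zero]
    · rw [h23, hlast', neg_zero]
  · exact hlast' a b c

theorem pairF_castSucc {n : ℕ} (a b i j : Fin n) :
    pairF a.castSucc b.castSucc i.castSucc j.castSucc = pairF a b i j := by
  simp only [pairF, kd_castSucc]

theorem tripF_castSucc {n : ℕ} (a b c i j k : Fin n) :
    tripF a.castSucc b.castSucc c.castSucc i.castSucc j.castSucc k.castSucc
      = tripF a b c i j k := by
  simp only [tripF, kd_castSucc]

theorem omega7_castSucc (i j : Fin 6) : omega7 i.castSucc j.castSucc = omega6 i j := by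
  simp only [omega6, ← pairF_castSucc 0 1, ← pairF_castSucc 2 3, ← pairF_castSucc 4 5]
  rfl

theorem psi7_castSucc (i j k : Fin 6) : psi7 i.castSucc j.castSucc k.castSucc = psi6 i j k := by
  simp only [psi6, ← tripF_castSucc 0 2 4, ← tripF_castSucc 0 3 5, ← tripF_castSucc 1 2 5,
    ← tripF_castSucc 1 3 4]
  rfl

theorem omega7_castSucc_last (i : Fin 6) : omega7 i.castSucc (Fin.last 6) = 0 := by
  simp [omega7, pairF, kd]

theorem psi7_castSucc_last (i j : Fin 6) : psi7 i.castSucc j.castSucc (Fin.last 6) = 0 := by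
  simp [psi7, tripF, kd, det_fin_three]

theorem eta7_castSucc (i : Fin 6) : eta7 i.castSucc = 0 := kd_last_castSucc i

theorem eta7_last : eta7 (Fin.last 6) = 1 := kd_self _

def phi7 : Fin 7 → Fin 7 → Fin 7 → ℝ := fun i j k => w21 omega7 eta7 i j k + psi7 i j k

theorem phi7_antisymm (m x y : Fin 7) : phi7 m x y = -phi7 m y x := by
  simp only [phi7, w21, omega7, pairF, psi7, tripF, det_fin_three, of_apply, cons_val',
    cons_val_zero, cons_val_one, cons_val_fin_one, Matrix.cons_val]
  ring

theorem phi7_castSucc (i j k : Fin 6) : phi7 i.castSucc j.castSucc k.castSucc = psi6 i j k := by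
  simp only [phi7, w21, eta7_castSucc, psi7_castSucc]
  ring

theorem phi7_castSucc_last (i j : Fin 6) :
    phi7 i.castSucc j.castSucc (Fin.last 6) = omega6 i j := by
  simp only [phi7, w21, omega7_castSucc, omega7_castSucc_last, psi7_castSucc_last, eta7_castSucc,
    eta7_last]
  ring

-- For alternating `α` this is `α(De_a, e_b, e_c) + α(e_a, De_b, e_c) + α(e_a, e_b, De_c)`.
def formAction {n : ℕ} (D : Matrix (Fin n) (Fin n) ℝ) (α : Fin n → Fin n → Fin n → ℝ)
    (a b c : Fin n) : ℝ :=
  (∑ m, D m a * α m b c) - (∑ m, D m b * α m a c) + (∑ m, D m c * α m a b)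

section Semidirect

variable (f : Fin 6 → Fin 6 → Fin 6 → ℝ) (D : Matrix (Fin 6) (Fin 6) ℝ)

theorem brg_last (a b : Fin 7) : brg f D (Fin.last 6) a b = 0 := by
  simp [brg]

theorem brg_castSucc (i a b : Fin 6) : brg f D i.castSucc a.castSucc b.castSucc = f i a b := by
  simp [brg]

theorem brg_castSucc_last (i a : Fin 6) :
    brg f D i.castSucc a.castSucc (Fin.last 6) = -D i a := by
  simp [brg]

theorem brg_antisymm (hanti : ∀ i a b, f i a b = -f i b a) (m x y : Fin 7) :
    brg f D m x y = -brg f D m y x := by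
  unfold brg
  by_cases hm : (m : ℕ) < 6
  · by_cases hx : (x : ℕ) < 6 <;> by_cases hy : (y : ℕ) < 6 <;>
      simp only [hm, hx, hy, dif_pos, dif_neg, not_false_eq_true, neg_neg, neg_zero]
    exact hanti _ _ _
  · simp only [hm, dif_neg, not_false_eq_true, neg_zero]

theorem d3_brg_phi7_castSucc (a b c d : Fin 6) :
    d3 (brg f D) phi7 a.castSucc b.castSucc c.castSucc d.castSucc = d3 f psi6 a b c d := by
  simp only [d3, Fin.sum_univ_castSucc, brg_last, zero_mul, add_zero, brg_castSucc, phi7_castSucc]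

theorem d3_brg_phi7_castSucc_last (a b c : Fin 6) :
    d3 (brg f D) phi7 a.castSucc b.castSucc c.castSucc (Fin.last 6)
      = d2 f omega6 a b c + formAction D psi6 a b c := by
  simp only [d3, d2, formAction, Fin.sum_univ_castSucc, brg_last, zero_mul, add_zero,
    brg_castSucc, brg_castSucc_last, phi7_castSucc, phi7_castSucc_last, neg_mul, sum_neg_distrib]
  ring

end Semidirect

theorem sum_det_mulVec_rows_eq_trace_mul_det {R : Type*} [CommRing R]
    (M : Matrix (Fin 3) (Fin 3) R) (u v w : Fin 3 → R) :
    det (of ![M *ᵥ u, v, w]) + det (of ![u, M *ᵥ v, w]) + det (of ![u, v, M *ᵥ w])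
      = M.trace * det (of ![u, v, w]) := by
  simp only [det_fin_three, of_apply, cons_val', cons_val_zero, cons_val_one, cons_val_fin_one,
    Matrix.cons_val, mulVec, dotProduct, Fin.sum_univ_three, trace_fin_three]
  ring

def complexCoords (x : Fin 6 → ℝ) : Fin 3 → ℂ := ![⟨x 0, x 1⟩, ⟨x 2, x 3⟩, ⟨x 4, x 5⟩]

def complexVolume (x y z : Fin 6 → ℝ) : ℂ :=
  det (of ![complexCoords x, complexCoords y, complexCoords z])

theorem complexCoords_realRep_mulVec (A : Matrix (Fin 3) (Fin 3) ℂ) (x : Fin 6 → ℝ) :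
    complexCoords (realRep A *ᵥ x) = A.map star *ᵥ complexCoords x := by
  funext p
  fin_cases p <;> apply Complex.ext <;>
    simp [complexCoords, mulVec, dotProduct, Fin.sum_univ_six, Fin.sum_univ_three, realRep] <;>
    ring

theorem sum_mul_psi6 (x : Fin 6 → ℝ) (b c : Fin 6) :
    ∑ m, x m * psi6 m b c = (complexVolume x (kd · b) (kd · c)).re := by
  simp only [Fin.sum_univ_six, psi6, tripF, complexVolume, complexCoords, det_fin_three, of_apply,
    cons_val', cons_val_zero, cons_val_one, cons_val_fin_one, Matrix.cons_val, kd_self, ne_eq,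
    Fin.reduceEq, not_false_eq_true, kd_of_ne, Complex.sub_re, Complex.add_re, Complex.mul_re,
    Complex.mul_im]
  ring

theorem complexVolume_swap (x y z : Fin 6 → ℝ) : complexVolume y x z = -complexVolume x y z := by
  simp only [complexVolume, det_fin_three, of_apply, cons_val', cons_val_zero, cons_val_one,
    cons_val_fin_one, Matrix.cons_val]
  ring

theorem complexVolume_rotate (x y z : Fin 6 → ℝ) : complexVolume z x y = complexVolume x y z := by
  simp only [complexVolume, det_fin_three, of_apply, cons_val', cons_val_zero, cons_val_one,
    cons_val_fin_one, Matrix.cons_val]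
  ring

theorem complexVolume_realRep_derivation (A : Matrix (Fin 3) (Fin 3) ℂ) (x y z : Fin 6 → ℝ) :
    complexVolume (realRep A *ᵥ x) y z + complexVolume x (realRep A *ᵥ y) z
      + complexVolume x y (realRep A *ᵥ z) = star A.trace * complexVolume x y z := by
  simp only [complexVolume, complexCoords_realRep_mulVec, sum_det_mulVec_rows_eq_trace_mul_det]
  congr 1
  simp [trace_fin_three]

theorem realRep_mulVec_kd (A : Matrix (Fin 3) (Fin 3) ℂ) (a : Fin 6) :
    realRep A *ᵥ (kd · a) = fun m => realRep A m a := by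
  have hkd : (kd · a) = Pi.single a (1 : ℝ) := by
    funext m
    simp [kd, Pi.single_apply]
  rw [hkd, mulVec_single_one]
  rfl

theorem formAction_realRep_psi6 (A : Matrix (Fin 3) (Fin 3) ℂ) (hA : A.trace = 0)
    (a b c : Fin 6) :
    formAction (realRep A) psi6 a b c = 0 := by
  simp only [formAction, sum_mul_psi6, ← realRep_mulVec_kd]
  rw [complexVolume_swap (kd · a), complexVolume_rotate (kd · a) (kd · b)]
  have h := congrArg Complex.re (complexVolume_realRep_derivation A (kd · a) (kd · b) (kd · c))
  rw [hA, star_zero, zero_mul, Complex.add_re, Complex.add_re, Complex.zero_re] at h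
  rw [Complex.neg_re]
  linarith

theorem stmt_9_general (f : Fin 6 → Fin 6 → Fin 6 → ℝ)
    (hanti : ∀ i a b, f i a b = -f i b a)
    (homega : ∀ a b c : Fin 6, d2 f omega6 a b c = 0)
    (hpsi : ∀ a b c d : Fin 6, d3 f psi6 a b c d = 0)
    (D : Matrix (Fin 6) (Fin 6) ℝ)
    (A : Matrix (Fin 3) (Fin 3) ℂ) (hA : Matrix.trace A = 0) (hDA : D = realRep A) :
    ∀ a b c d : Fin 7,
      d3 (brg f D) (fun i j k => w21 omega7 eta7 i j k + psi7 i j k) a b c d = 0 := by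
  intro a b c d
  refine eq_zero_of_castSucc_of_last (F := d3 (brg f D) phi7)
    (d3_swap_01 (brg_antisymm f D hanti) phi7_antisymm)
    (d3_swap_12 (brg_antisymm f D hanti) phi7_antisymm)
    (d3_swap_23 (brg_antisymm f D hanti) phi7_antisymm) (fun a b c d => ?_) (fun a b c => ?_)
    a b c d
  · rw [d3_brg_phi7_castSucc, hpsi]
  · rw [d3_brg_phi7_castSucc_last, homega, hDA, formAction_realRep_psi6 A hA, add_zero]

/-- If `h` is a 6-dimensional Lie algebra (structure constants `f`) on which
`ω = e^{12}+e^{34}+e^{56}` and `ψ₊ = e^{135}−e^{146}−e^{236}−e^{245}` are closed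
(symplectic half-flat), and `D` is a derivation of `h` which is the real
representation of some traceless `A ∈ sl(3,ℂ)`, then on `g = h ⊕_D ℝξ`
the 3-form `φ = ω∧η + ψ₊` is closed. -/
theorem stmt_9 (f : Fin 6 → Fin 6 → Fin 6 → ℝ)
    (hanti : ∀ i a b, f i a b = -f i b a)
    (hjac : ∀ i a b c : Fin 6,
      (∑ m, f i m c * f m a b) + (∑ m, f i m a * f m b c) + (∑ m, f i m b * f m c a) = 0)
    (homega : ∀ a b c : Fin 6, d2 f omega6 a b c = 0)
    (hpsi : ∀ a b c d : Fin 6, d3 f psi6 a b c d = 0)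
    (D : Matrix (Fin 6) (Fin 6) ℝ)
    (hder : ∀ i a b : Fin 6,
      (∑ m, D i m * f m a b) = (∑ m, f i m b * D m a) + (∑ m, f i a m * D m b))
    (A : Matrix (Fin 3) (Fin 3) ℂ) (hA : Matrix.trace A = 0) (hDA : D = realRep A) :
    ∀ a b c d : Fin 7,
      d3 (brg f D) (fun i j k => w21 omega7 eta7 i j k + psi7 i j k) a b c d = 0 :=
  stmt_9_general f hanti homega hpsi D A hA hDA
end

section
/- For every a ∈ ℝ, the 7-dimensional Lie algebra with structure equations de¹ = −e^{15}+e^{36}−a e^{37}, de² = e^{46}+e^{25}−a e^{47}, de³ = −e^{16}−e^{35}+a e^{17}, de⁴ = e^{45}−e^{26}−a e^{27}, de⁵ = de⁶ = de⁷ = 0 satisfies d² = 0, and the 3-form φ = e^{127}+e^{347}+e^{567}+e^{135}−e^{146}−e^{236}−e^{245} is closed on it. -/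
open Finset BigOperators

/-- Structure constants of `g_{6,118}^{0,−1,−1} ⊕_D ℝe₇` for the parameter `a`. -/
def bb16 (a : ℝ) : Fin 7 → Fin 7 → Fin 7 → ℝ := fun i x y =>
  if i = 0 ∧ x = 0 ∧ y = 4 then 1
  else if i = 0 ∧ x = 2 ∧ y = 5 then -1
  else if i = 0 ∧ x = 2 ∧ y = 6 then a
  else if i = 1 ∧ x = 3 ∧ y = 5 then -1
  else if i = 1 ∧ x = 1 ∧ y = 4 then -1
  else if i = 1 ∧ x = 3 ∧ y = 6 then a
  else if i = 2 ∧ x = 0 ∧ y = 5 then 1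
  else if i = 2 ∧ x = 2 ∧ y = 4 then 1
  else if i = 2 ∧ x = 0 ∧ y = 6 then -a
  else if i = 3 ∧ x = 3 ∧ y = 4 then -1
  else if i = 3 ∧ x = 1 ∧ y = 5 then 1
  else if i = 3 ∧ x = 1 ∧ y = 6 then -a
  else 0

def br16 (a : ℝ) : Fin 7 → Fin 7 → Fin 7 → ℝ := fun i x y => bb16 a i x y - bb16 a i y x

def phi16 : Fin 7 → Fin 7 → Fin 7 → ℝ := fun i j k =>
  tripF 0 1 6 i j k + tripF 2 3 6 i j k + tripF 4 5 6 i j k + psi7 i j k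

/-! The structure constants are affine in `a`: `br16 a = P + a • Q` with integer tables `P`, the
bracket of `g_{6,118}^{0,-1,-1} ⊕ ℝe₇` with `e₇` central, and `Q`, the bracket `[e₇, ·] = D / a`.
So `d(de^i)` is quadratic and `dφ` affine in `a`, and each coefficient is an identity between
integer structure constants: the Jacobi identity of `P`, `D / a` being a derivation of `P`, the
vanishing of the `a²` term (every nonzero entry of `Q` involves `e₇`), and `dφ = 0` for `P` and
for `Q` separately. These finitely many integer identities are checked by evaluation. -/

section ChevalleyEilenberg

variable {R : Type*} [CommRing R] {n : ℕ}

/- `d2`, `d3` over an arbitrary commutative ring, so that their integer instances can be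
evaluated by `decide`; `bracketTable` and `g2Form` below do the same for `bb16` and `phi16`. -/

def ceD2 (br : Fin n → Fin n → Fin n → R) (α : Fin n → Fin n → R) (a b c : Fin n) : R :=
  -(∑ m, br m a b * α m c) + (∑ m, br m a c * α m b) - (∑ m, br m b c * α m a)

def ceD3 (br : Fin n → Fin n → Fin n → R) (α : Fin n → Fin n → Fin n → R)
    (a b c d : Fin n) : R :=
  -(∑ m, br m a b * α m c d) + (∑ m, br m a c * α m b d) - (∑ m, br m a d * α m b c)
  - (∑ m, br m b c * α m a d) + (∑ m, br m b d * α m a c) - (∑ m, br m c d * α m a b)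

theorem d2_eq_ceD2 : d2 (n := n) = ceD2 := rfl

theorem d3_eq_ceD3 : d3 (n := n) = ceD3 := rfl

theorem ceD2_add_smul (p q : Fin n → Fin n → Fin n → R) (α β : Fin n → Fin n → R) (t : R)
    (a b c : Fin n) :
    ceD2 (p + t • q) (α + t • β) a b c =
      ceD2 p α a b c + t * (ceD2 p β a b c + ceD2 q α a b c) + t ^ 2 * ceD2 q β a b c := by
  have expand (m u v w : Fin n) : (p + t • q) m u v * (α + t • β) m w =
      p m u v * α m w + t * (p m u v * β m w + q m u v * α m w) + t ^ 2 * (q m u v * β m w) := by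
    simp only [Pi.add_apply, Pi.smul_apply, smul_eq_mul]
    ring
  simp only [ceD2, expand, sum_add_distrib, ← mul_sum]
  ring

theorem ceD3_add_smul_left (p q : Fin n → Fin n → Fin n → R) (α : Fin n → Fin n → Fin n → R)
    (t : R) (a b c d : Fin n) :
    ceD3 (p + t • q) α a b c d = ceD3 p α a b c d + t * ceD3 q α a b c d := by
  simp only [ceD3, Pi.add_apply, Pi.smul_apply, smul_eq_mul, add_mul, mul_assoc,
    sum_add_distrib, ← mul_sum]
  ring

theorem Int.cast_ceD2 (br : Fin n → Fin n → Fin n → ℤ) (α : Fin n → Fin n → ℤ) (a b c : Fin n) :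
    ((ceD2 br α a b c : ℤ) : R) =
      ceD2 (fun i x y => (br i x y : R)) (fun u v => (α u v : R)) a b c := by
  simp [ceD2]

theorem Int.cast_ceD3 (br : Fin n → Fin n → Fin n → ℤ) (α : Fin n → Fin n → Fin n → ℤ)
    (a b c d : Fin n) :
    ((ceD3 br α a b c d : ℤ) : R) =
      ceD3 (fun i x y => (br i x y : R)) (fun i j k => (α i j k : R)) a b c d := by
  simp [ceD3]

end ChevalleyEilenberg

section ElementaryForms

variable {R : Type*} [CommRing R] {n : ℕ}

def kron (a i : Fin n) : R := if a = i then 1 else 0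

def wedge3 (a b c i j k : Fin n) : R :=
  kron a i * kron b j * kron c k - kron a i * kron b k * kron c j
  - kron a j * kron b i * kron c k + kron a j * kron b k * kron c i
  + kron a k * kron b i * kron c j - kron a k * kron b j * kron c i

theorem tripF_eq_wedge3 (a b c i j k : Fin n) : tripF a b c i j k = wedge3 a b c i j k := by
  rw [tripF, Matrix.det_fin_three]
  rfl

theorem Int.cast_kron (a i : Fin n) : ((kron a i : ℤ) : R) = kron a i := by
  simp only [kron, Int.cast_ite, Int.cast_one, Int.cast_zero]

theorem Int.cast_wedge3 (a b c i j k : Fin n) :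
    ((wedge3 a b c i j k : ℤ) : R) = wedge3 a b c i j k := by
  simp [wedge3, Int.cast_kron]

end ElementaryForms

def g2Form {R : Type*} [CommRing R] : Fin 7 → Fin 7 → Fin 7 → R := fun i j k =>
  wedge3 0 1 6 i j k + wedge3 2 3 6 i j k + wedge3 4 5 6 i j k
  + (wedge3 0 2 4 i j k - wedge3 0 3 5 i j k - wedge3 1 2 5 i j k - wedge3 1 3 4 i j k)

theorem phi16_eq_g2Form : phi16 = g2Form := by
  funext i j k
  simp only [phi16, psi7, g2Form, tripF_eq_wedge3]

theorem Int.cast_g2Form {R : Type*} [CommRing R] (i j k : Fin 7) :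
    ((g2Form i j k : ℤ) : R) = g2Form i j k := by
  simp [g2Form, Int.cast_wedge3]

section Bracket

variable {R : Type*} [Ring R]

def bracketTable (a : R) : Fin 7 → Fin 7 → Fin 7 → R := fun i x y =>
  if i = 0 ∧ x = 0 ∧ y = 4 then 1
  else if i = 0 ∧ x = 2 ∧ y = 5 then -1
  else if i = 0 ∧ x = 2 ∧ y = 6 then a
  else if i = 1 ∧ x = 3 ∧ y = 5 then -1
  else if i = 1 ∧ x = 1 ∧ y = 4 then -1
  else if i = 1 ∧ x = 3 ∧ y = 6 then a
  else if i = 2 ∧ x = 0 ∧ y = 5 then 1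
  else if i = 2 ∧ x = 2 ∧ y = 4 then 1
  else if i = 2 ∧ x = 0 ∧ y = 6 then -a
  else if i = 3 ∧ x = 3 ∧ y = 4 then -1
  else if i = 3 ∧ x = 1 ∧ y = 5 then 1
  else if i = 3 ∧ x = 1 ∧ y = 6 then -a
  else 0

def bracket (a : R) : Fin 7 → Fin 7 → Fin 7 → R :=
  fun i x y => bracketTable a i x y - bracketTable a i y x

theorem br16_eq_bracket (a : ℝ) : br16 a = bracket a := rfl

theorem bracketTable_eq_add_mul (a : R) (i x y : Fin 7) :
    bracketTable a i x y =
      bracketTable 0 i x y + a * (bracketTable 1 i x y - bracketTable 0 i x y) := by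
  fin_cases i <;> fin_cases x <;> fin_cases y <;> simp [bracketTable]

theorem bracket_eq_add_smul (a : R) : bracket a = bracket 0 + a • (bracket 1 - bracket 0) := by
  funext i x y
  simp only [bracket, Pi.add_apply, Pi.smul_apply, Pi.sub_apply, smul_eq_mul]
  rw [bracketTable_eq_add_mul a i x y, bracketTable_eq_add_mul a i y x]
  noncomm_ring

theorem Int.cast_bracket (a : ℤ) (i x y : Fin 7) :
    ((bracket a i x y : ℤ) : R) = bracket (a : R) i x y := by
  simp only [bracket, bracketTable, Int.cast_sub, Int.cast_ite, Int.cast_one, Int.cast_neg,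
    Int.cast_zero]

end Bracket

def baseBracket : Fin 7 → Fin 7 → Fin 7 → ℤ := bracket 0

def derivationBracket : Fin 7 → Fin 7 → Fin 7 → ℤ := bracket 1 - bracket 0

theorem br16_eq_add_smul (a : ℝ) :
    br16 a = (fun i x y => (baseBracket i x y : ℝ))
      + a • fun i x y => (derivationBracket i x y : ℝ) := by
  rw [br16_eq_bracket, bracket_eq_add_smul]
  funext i x y
  simp [baseBracket, derivationBracket, Int.cast_bracket]

theorem ceD2_baseBracket_eq_zero (i x y z : Fin 7) :
    ceD2 baseBracket (fun u v => -baseBracket i u v) x y z = 0 := by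
  revert i x y z
  decide

theorem ceD2_baseBracket_derivationBracket_eq_zero (i x y z : Fin 7) :
    ceD2 baseBracket (fun u v => -derivationBracket i u v) x y z
      + ceD2 derivationBracket (fun u v => -baseBracket i u v) x y z = 0 := by
  revert i x y z
  decide

theorem ceD2_derivationBracket_eq_zero (i x y z : Fin 7) :
    ceD2 derivationBracket (fun u v => -derivationBracket i u v) x y z = 0 := by
  revert i x y z
  decide

theorem ceD3_baseBracket_g2Form_eq_zero (w x y z : Fin 7) :
    ceD3 baseBracket g2Form w x y z = 0 := by
  revert w x y z
  decide

theorem ceD3_derivationBracket_g2Form_eq_zero (w x y z : Fin 7) :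
    ceD3 derivationBracket g2Form w x y z = 0 := by
  revert w x y z
  decide

/-- For every `a ∈ ℝ` the structure equations satisfy `d² = 0` (so they define
a Lie algebra) and the G₂-form `φ` is closed on it. -/
theorem stmt_16 (a : ℝ) :
    (∀ i x y z : Fin 7, d2 (br16 a) (fun u v => -(br16 a i u v)) x y z = 0) ∧
    (∀ w x y z : Fin 7, d3 (br16 a) phi16 w x y z = 0) := by
  constructor
  · intro i x y z
    have hα : (fun u v => -br16 a i u v) = (fun u v => ((-baseBracket i u v : ℤ) : ℝ))
        + a • fun u v => ((-derivationBracket i u v : ℤ) : ℝ) := by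
      rw [br16_eq_add_smul]
      funext u v
      simp only [Pi.add_apply, Pi.smul_apply, smul_eq_mul, Int.cast_neg]
      ring
    rw [d2_eq_ceD2, hα, br16_eq_add_smul, ceD2_add_smul, ← Int.cast_ceD2, ← Int.cast_ceD2,
      ← Int.cast_ceD2, ← Int.cast_ceD2, ← Int.cast_add, ceD2_baseBracket_eq_zero,
      ceD2_baseBracket_derivationBracket_eq_zero, ceD2_derivationBracket_eq_zero]
    simp
  · intro w x y z
    have hφ : phi16 = fun i j k => ((g2Form i j k : ℤ) : ℝ) := by
      simp only [phi16_eq_g2Form, Int.cast_g2Form]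
    rw [d3_eq_ceD3, br16_eq_add_smul, hφ, ceD3_add_smul_left, ← Int.cast_ceD3, ← Int.cast_ceD3,
      ceD3_baseBracket_g2Form_eq_zero, ceD3_derivationBracket_g2Form_eq_zero]
    simp
end
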